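/- arXiv:2405.19551 — 2 statements merged into one kernel-verified Lean document; each statement's English description precedes it below -/
import Mathlib

section
/- Let J_1,…,J_M be a partition of {1,…,N} into nonempty sets, let x_1,…,x_K ∈ ℝ^N and y_1,…,y_K ∈ ℝ^M, and define the tropical ∞-Wasserstein projection objective f_∞(t) = max_{k≤K} ‖ (max_{i∈J_j}(x_{ki} − t_i))_{j≤M} − y_k ‖_tr. Then for every c ∈ ℝ the sub-level set {t ∈ ℝ^N : f_∞(t) ≤ c} is min-tropically convex. -/
/-- The tropical norm on ℝ^M : `‖x‖_tr = max_j x_j − min_j x_j`. -/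
noncomputable def trNorm {M : ℕ} [NeZero M] (x : Fin M → ℝ) : ℝ :=
  Finset.univ.sup' Finset.univ_nonempty x - Finset.univ.inf' Finset.univ_nonempty x

/-- A set `S ⊆ ℝ^N` is min-tropically convex if it is closed under pointwise
min-tropical linear combinations. -/
def MinTropConvex {N : ℕ} (S : Set (Fin N → ℝ)) : Prop :=
  ∀ t ∈ S, ∀ s ∈ S, ∀ α β : ℝ, (fun i => min (α + t i) (β + s i)) ∈ S

lemma trNorm_max_le {M : ℕ} [NeZero M] (a b : Fin M → ℝ) :
    trNorm (fun j => max (a j) (b j)) ≤ max (trNorm a) (trNorm b) := by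
  unfold trNorm
  have hsup : Finset.univ.sup' Finset.univ_nonempty (fun j => max (a j) (b j)) =
      max (Finset.univ.sup' Finset.univ_nonempty a)
          (Finset.univ.sup' Finset.univ_nonempty b) := by
    apply le_antisymm
    · exact Finset.sup'_le _ _ fun j _ =>
        max_le_max (Finset.le_sup' a (Finset.mem_univ j)) (Finset.le_sup' b (Finset.mem_univ j))
    · exact max_le
        (Finset.sup'_le _ _ fun j _ => Finset.le_sup'_of_le _ (Finset.mem_univ j) (le_max_left _ _))
        (Finset.sup'_le _ _ fun j _ => Finset.le_sup'_of_le _ (Finset.mem_univ j) (le_max_right _ _))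
  have hinf : max (Finset.univ.inf' Finset.univ_nonempty a)
      (Finset.univ.inf' Finset.univ_nonempty b) ≤
      Finset.univ.inf' Finset.univ_nonempty (fun j => max (a j) (b j)) := by
    apply Finset.le_inf'
    intro j _
    exact max_le_max (Finset.inf'_le a (Finset.mem_univ j)) (Finset.inf'_le b (Finset.mem_univ j))
  rw [hsup]
  rcases max_cases (Finset.univ.sup' Finset.univ_nonempty a)
      (Finset.univ.sup' Finset.univ_nonempty b) with ⟨h, h2⟩ | ⟨h, h2⟩ <;> rw [h]
  · refine le_max_of_le_left ?_
    have := le_max_left (Finset.univ.inf' Finset.univ_nonempty a)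
      (Finset.univ.inf' Finset.univ_nonempty b)
    linarith
  · refine le_max_of_le_right ?_
    have := le_max_right (Finset.univ.inf' Finset.univ_nonempty a)
      (Finset.univ.inf' Finset.univ_nonempty b)
    linarith

lemma trNorm_add_const {M : ℕ} [NeZero M] (a : Fin M → ℝ) (d : ℝ) :
    trNorm (fun j => a j + d) = trNorm a := by
  unfold trNorm
  have h1 : Finset.univ.sup' Finset.univ_nonempty (fun j => a j + d) =
      Finset.univ.sup' Finset.univ_nonempty a + d :=
    (Finset.sup'_add Finset.univ (f := a) d Finset.univ_nonempty).symm
  have h2 : Finset.univ.inf' Finset.univ_nonempty (fun j => a j + d) =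
      Finset.univ.inf' Finset.univ_nonempty a + d := by
    apply le_antisymm
    · obtain ⟨j, _, hj⟩ := Finset.exists_mem_eq_inf' (Finset.univ_nonempty (α := Fin M)) a
      calc _ ≤ a j + d := Finset.inf'_le _ (Finset.mem_univ j)
        _ = _ := by rw [hj]
    · exact Finset.le_inf' _ _ fun j _ => by
        have := Finset.inf'_le a (Finset.mem_univ j); linarith
  rw [h1, h2]; ring

/-- The sub-level sets of the tropical ∞-Wasserstein projection objective
`f_∞(t) = max_k ‖(max_{i ∈ J_j}(x_{k i} − t_i))_j − y_k‖_tr`, for a partition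
`J₁, …, J_M` of the coordinates into nonempty sets, are min-tropically convex. -/
theorem stmt12 {N M K : ℕ} [NeZero M] [NeZero K]
    (J : Fin M → Finset (Fin N)) (hJne : ∀ j, (J j).Nonempty)
    (hJpart : ∀ i : Fin N, ∃! j, i ∈ J j)
    (x : Fin K → Fin N → ℝ) (y : Fin K → Fin M → ℝ) (c : ℝ) :
    MinTropConvex {t : Fin N → ℝ |
      Finset.univ.sup' Finset.univ_nonempty (fun k =>
        trNorm ((fun j => (J j).sup' (hJne j) (fun i => x k i - t i)) - y k)) ≤ c} := by
  intro t ht s hs α β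
  simp only [Set.mem_setOf_eq] at ht hs ⊢
  apply Finset.sup'_le
  intro k _
  have hkt : trNorm ((fun j => (J j).sup' (hJne j) (fun i => x k i - t i)) - y k) ≤ c :=
    le_trans (Finset.le_sup'
      (fun k => trNorm ((fun j => (J j).sup' (hJne j) (fun i => x k i - t i)) - y k))
      (Finset.mem_univ k)) ht
  have hks : trNorm ((fun j => (J j).sup' (hJne j) (fun i => x k i - s i)) - y k) ≤ c :=
    le_trans (Finset.le_sup'
      (fun k => trNorm ((fun j => (J j).sup' (hJne j) (fun i => x k i - s i)) - y k))
      (Finset.mem_univ k)) hs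
  set A : Fin M → ℝ := fun j => (J j).sup' (hJne j) (fun i => x k i - t i) with hA
  set B : Fin M → ℝ := fun j => (J j).sup' (hJne j) (fun i => x k i - s i) with hB
  have key : ((fun j => (J j).sup' (hJne j)
      (fun i => x k i - min (α + t i) (β + s i))) - y k)
      = fun j => max ((A j - y k j) + (-α)) ((B j - y k j) + (-β)) := by
    funext j
    simp only [Pi.sub_apply]
    have : ∀ i : Fin N, x k i - min (α + t i) (β + s i)
        = max ((x k i - t i) - α) ((x k i - s i) - β) := by
      intro i
      rcases min_cases (α + t i) (β + s i) with ⟨h, h2⟩ | ⟨h, h2⟩ <;> rw [h]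
      · rw [max_eq_left (by linarith)]; ring
      · rw [max_eq_right (by linarith)]; ring
    simp_rw [this]
    have hmax : (J j).sup' (hJne j) (fun i => max ((x k i - t i) - α) ((x k i - s i) - β))
        = max ((J j).sup' (hJne j) (fun i => (x k i - t i) - α))
              ((J j).sup' (hJne j) (fun i => (x k i - s i) - β)) := by
      apply le_antisymm
      · exact Finset.sup'_le _ _ fun i hi =>
          max_le_max (Finset.le_sup' (fun i => (x k i - t i) - α) hi)
            (Finset.le_sup' (fun i => (x k i - s i) - β) hi)
      · exact max_le
          (Finset.sup'_le _ _ fun i hi => Finset.le_sup'_of_le _ hi (le_max_left _ _))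
          (Finset.sup'_le _ _ fun i hi => Finset.le_sup'_of_le _ hi (le_max_right _ _))
    rw [hmax]
    have h1 : (J j).sup' (hJne j) (fun i => (x k i - t i) - α) = A j - α := by
      rw [hA]; simp only [sub_eq_add_neg (b := α)]
      exact (Finset.sup'_add (J j) (f := fun i => x k i - t i) (-α) (hJne j)).symm
    have h2 : (J j).sup' (hJne j) (fun i => (x k i - s i) - β) = B j - β := by
      rw [hB]; simp only [sub_eq_add_neg (b := β)]
      exact (Finset.sup'_add (J j) (f := fun i => x k i - s i) (-β) (hJne j)).symm
    rw [h1, h2]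
    rcases max_cases (A j - α) (B j - β) with ⟨h, h2⟩ | ⟨h, h2⟩ <;>
      rcases max_cases ((A j - y k j) + (-α)) ((B j - y k j) + (-β)) with ⟨h3, h4⟩ | ⟨h3, h4⟩ <;>
      rw [h, h3] <;> linarith
  rw [key]
  calc trNorm (fun j => max ((A j - y k j) + (-α)) ((B j - y k j) + (-β)))
      ≤ max (trNorm (fun j => (A j - y k j) + (-α)))
            (trNorm (fun j => (B j - y k j) + (-β))) :=
        trNorm_max_le _ _
    _ ≤ c := by
        rw [trNorm_add_const (fun j => A j - y k j) (-α),
            trNorm_add_const (fun j => B j - y k j) (-β)]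
        exact max_le hkt hks
end

section
/- Let J_1,…,J_M be a partition of {1,…,N} into nonempty sets, let x, t ∈ ℝ^N and y ∈ ℝ^M, and define z ∈ ℝ^N by z_i = x_i − y_j for the unique j with i ∈ J_j. Then ‖ (max_{i∈J_j}(x_i − t_i))_{j≤M} − y ‖_tr = max_{j≤M} min_{i∈J_j} ( t_i − z_i − min_{a≤N}(t_a − z_a) ). -/
lemma my_sup'_neg {ι : Type*} (s : Finset ι) (h : s.Nonempty) (f : ι → ℝ) :
    s.sup' h (fun i => -f i) = - s.inf' h f := by
  apply le_antisymm
  · exact Finset.sup'_le _ _ fun i hi => neg_le_neg (Finset.inf'_le _ hi)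
  · obtain ⟨i, hi, he⟩ := Finset.exists_mem_eq_inf' h f
    rw [he]; exact Finset.le_sup' (fun i => -f i) hi

lemma my_inf'_neg {ι : Type*} (s : Finset ι) (h : s.Nonempty) (f : ι → ℝ) :
    s.inf' h (fun i => -f i) = - s.sup' h f := by
  have := my_sup'_neg s h (fun i => -f i)
  simp only [neg_neg] at this
  linarith

lemma my_inf'_sub {ι : Type*} (s : Finset ι) (h : s.Nonempty) (f : ι → ℝ) (c : ℝ) :
    s.inf' h (fun i => f i - c) = s.inf' h f - c := by
  apply le_antisymm
  · obtain ⟨i, hi, he⟩ := Finset.exists_mem_eq_inf' h f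
    rw [he]
    exact Finset.inf'_le _ hi
  · exact Finset.le_inf' _ _ fun i hi => sub_le_sub_right (Finset.inf'_le _ hi) _

/-- Rewriting of the tropical norm appearing in the Wasserstein projection objective:
for a partition `J₁, …, J_M` of the coordinates into nonempty sets and
`z_i = x_i − y_j` for the unique `j` with `i ∈ J_j`,
`‖(max_{i ∈ J_j}(x_i − t_i))_j − y‖_tr
  = max_j min_{i ∈ J_j} (t_i − z_i − min_a (t_a − z_a))`. -/
theorem stmt13 {N M : ℕ} [NeZero N] [NeZero M]
    (J : Fin M → Finset (Fin N)) (hJne : ∀ j, (J j).Nonempty)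
    (hJpart : ∀ i : Fin N, ∃! j, i ∈ J j)
    (x t : Fin N → ℝ) (y : Fin M → ℝ) (z : Fin N → ℝ)
    (hz : ∀ j, ∀ i ∈ J j, z i = x i - y j) :
    trNorm ((fun j => (J j).sup' (hJne j) (fun i => x i - t i)) - y) =
      Finset.univ.sup' Finset.univ_nonempty (fun j =>
        (J j).inf' (hJne j) (fun i =>
          t i - z i - Finset.univ.inf' Finset.univ_nonempty (fun a => t a - z a))) := by
  set f : Fin N → ℝ := fun i => t i - z i with hf
  set m : Fin M → ℝ := fun j => (J j).inf' (hJne j) f with hm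
  set c : ℝ := Finset.univ.inf' Finset.univ_nonempty f with hc
  -- the vector is `-m`
  have hu : ((fun j => (J j).sup' (hJne j) (fun i => x i - t i)) - y) = fun j => -m j := by
    funext j
    have h1 : (J j).sup' (hJne j) (fun i => x i - t i) - y j
        = (J j).sup' (hJne j) (fun i => x i - t i + (-y j)) := Finset.sup'_add _ _ _ _
    have h2 : (J j).sup' (hJne j) (fun i => x i - t i + (-y j))
        = (J j).sup' (hJne j) (fun i => -f i) := by
      apply Finset.sup'_congr _ rfl
      intro i hi
      have := hz j i hi
      simp only [hf]
      linarith
    simp only [Pi.sub_apply, h1, h2, my_sup'_neg, hm]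
  -- c equals the min over j of m j
  have hcm : c = Finset.univ.inf' Finset.univ_nonempty m := by
    apply le_antisymm
    · apply Finset.le_inf'
      intro j _
      apply Finset.le_inf'
      intro i hi
      exact Finset.inf'_le _ (Finset.mem_univ i)
    · apply Finset.le_inf'
      intro i _
      obtain ⟨j, hj, -⟩ := hJpart i
      exact le_trans (Finset.inf'_le _ (Finset.mem_univ j)) (Finset.inf'_le _ hj)
  have hrhs : (fun j => (J j).inf' (hJne j) (fun i => f i - c)) = fun j => m j - c := by
    funext j
    exact my_inf'_sub _ _ _ _
  rw [hu]
  show Finset.univ.sup' Finset.univ_nonempty (fun j => -m j)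
      - Finset.univ.inf' Finset.univ_nonempty (fun j => -m j) = _
  rw [my_sup'_neg, my_inf'_neg, hrhs]
  rw [show (fun j => m j - c) = (fun j => m j + (-c)) by funext j; ring, ← Finset.sup'_add]
  rw [hcm]
  ring
end
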